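/- Writing c = [a,b] and d = [c,a] in Γ (with [x,y] = x⁻¹y⁻¹xy), the second derived subgroup Γ″ of Γ equals the subgroup {g ∈ Aut(X^*) : π_g = 1, g_1 ∈ γ₃(Γ), g_2 ∈ γ₃(Γ)}, i.e. Γ″ = γ₃(Γ) × γ₃(Γ) under the wreath decomposition, where γ₃(Γ) is the third term of the lower central series of Γ (the normal closure of d in Γ). -/

import Mathlib

namespace PinkGroup

mutual
  /-- forward action of the generator `a` -/
  def aF : List Bool → List Bool
    | [] => []
    | false :: w => true :: bF w
    | true :: w => false :: w
  /-- forward action of the generator `b` -/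
  def bF : List Bool → List Bool
    | [] => []
    | false :: w => false :: aF w
    | true :: w => true :: w
end

mutual
  /-- inverse of `aF` -/
  def aIF : List Bool → List Bool
    | [] => []
    | true :: w => false :: bIF w
    | false :: w => true :: w
  /-- inverse of `bF` -/
  def bIF : List Bool → List Bool
    | [] => []
    | false :: w => false :: aIF w
    | true :: w => true :: w
end

lemma inv_all (w : List Bool) :
    aF (aIF w) = w ∧ bF (bIF w) = w ∧ aIF (aF w) = w ∧ bIF (bF w) = w := by
  induction w with
  | nil => simp [aF, bF, aIF, bIF]
  | cons x w ih =>
    cases x <;>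
      simp [aF, bF, aIF, bIF, ih.1, ih.2.1, ih.2.2.1, ih.2.2.2]

/-- The generator `a` of Pink's group: `(1w)^a = 2 w^b`, `(2w)^a = 1w`
(where the letter `1` is `false` and the letter `2` is `true`). -/
def a : Equiv.Perm (List Bool) :=
  ⟨aF, aIF, fun w => (inv_all w).2.2.1, fun w => (inv_all w).1⟩

/-- The generator `b` of Pink's group: `(1w)^b = 1 w^a`, `(2w)^b = 2w`. -/
def b : Equiv.Perm (List Bool) :=
  ⟨bF, bIF, fun w => (inv_all w).2.2.2, fun w => (inv_all w).2.1⟩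

/-- Pink's group `Γ`, the iterated monodromy group of `z^2 - 1`. -/
def Gam : Subgroup (Equiv.Perm (List Bool)) := Subgroup.closure {a, b}

lemma a_mem : a ∈ Gam := Subgroup.subset_closure (by simp)

lemma b_mem : b ∈ Gam := Subgroup.subset_closure (by simp)

open scoped commutatorElement




-- ### concrete action lemmas
@[simp] lemma a_nil : a [] = [] := rfl
@[simp] lemma b_nil : b [] = [] := rfl
@[simp] lemma a_false (t : List Bool) : a (false :: t) = true :: b t := rfl
@[simp] lemma a_true (t : List Bool) : a (true :: t) = false :: t := rfl
@[simp] lemma b_false (t : List Bool) : b (false :: t) = false :: a t := rfl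
@[simp] lemma b_true (t : List Bool) : b (true :: t) = true :: t := rfl
@[simp] lemma ai_nil : a⁻¹ [] = [] := rfl
@[simp] lemma bi_nil : b⁻¹ [] = [] := rfl
@[simp] lemma ai_true (t : List Bool) : a⁻¹ (true :: t) = false :: b⁻¹ t := rfl
@[simp] lemma ai_false (t : List Bool) : a⁻¹ (false :: t) = true :: t := rfl
@[simp] lemma bi_false (t : List Bool) : b⁻¹ (false :: t) = false :: a⁻¹ t := rfl
@[simp] lemma bi_true (t : List Bool) : b⁻¹ (true :: t) = true :: t := rfl

-- ### sections
/-- `IsSec g k₁ k₂` : `g` fixes the root and acts as `(k₁, k₂)`. -/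
def IsSec (g k₁ k₂ : Equiv.Perm (List Bool)) : Prop :=
  g [] = [] ∧ (∀ t, g (false :: t) = false :: k₁ t) ∧ (∀ t, g (true :: t) = true :: k₂ t)

lemma IsSec.one : IsSec 1 1 1 := ⟨rfl, fun _ => rfl, fun _ => rfl⟩

lemma IsSec.mul {g h k₁ k₂ l₁ l₂ : Equiv.Perm (List Bool)}
    (hg : IsSec g k₁ k₂) (hh : IsSec h l₁ l₂) : IsSec (g * h) (k₁ * l₁) (k₂ * l₂) := by
  refine ⟨?_, fun t => ?_, fun t => ?_⟩
  · show g (h []) = []; rw [hh.1, hg.1]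
  · show g (h (false :: t)) = _
    rw [hh.2.1, hg.2.1]; rfl
  · show g (h (true :: t)) = _
    rw [hh.2.2, hg.2.2]; rfl

lemma IsSec.inv {g k₁ k₂ : Equiv.Perm (List Bool)} (hg : IsSec g k₁ k₂) :
    IsSec g⁻¹ k₁⁻¹ k₂⁻¹ := by
  refine ⟨?_, fun t => ?_, fun t => ?_⟩
  · have := hg.1; exact (Equiv.symm_apply_eq g).mpr this.symm
  · have : g (false :: k₁⁻¹ t) = false :: t := by rw [hg.2.1]; simp
    exact (Equiv.symm_apply_eq g).mpr this.symm
  · have : g (true :: k₂⁻¹ t) = true :: t := by rw [hg.2.2]; simp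
    exact (Equiv.symm_apply_eq g).mpr this.symm

lemma IsSec.commutator {g h k₁ k₂ l₁ l₂ : Equiv.Perm (List Bool)}
    (hg : IsSec g k₁ k₂) (hh : IsSec h l₁ l₂) : IsSec ⁅g, h⁆ ⁅k₁, l₁⁆ ⁅k₂, l₂⁆ :=
  (((hg.mul hh).mul hg.inv).mul hh.inv)

lemma IsSec.ext {g g' k₁ k₂ : Equiv.Perm (List Bool)}
    (hg : IsSec g k₁ k₂) (hg' : IsSec g' k₁ k₂) : g = g' := by
  apply Equiv.ext
  intro w
  match w with
  | [] => rw [hg.1, hg'.1]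
  | false :: t => rw [hg.2.1, hg'.2.1]
  | true :: t => rw [hg.2.2, hg'.2.2]

lemma isSec_b : IsSec b a 1 := ⟨rfl, fun _ => rfl, fun _ => rfl⟩

lemma isSec_a2 : IsSec (a * a) b b :=
  ⟨rfl, fun t => by show a (a _) = _; simp, fun t => by show a (a _) = _; simp⟩

lemma isSec_aba : IsSec (a⁻¹ * b * a) 1 a := by
  refine ⟨rfl, fun t => ?_, fun t => ?_⟩
  · show a⁻¹ (b (a (false :: t))) = _
    simp
  · show a⁻¹ (b (a (true :: t))) = _
    simp

def c : Equiv.Perm (List Bool) := ⁅a, b⁆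
def d : Equiv.Perm (List Bool) := ⁅c, a⁆

lemma isSec_c : IsSec c a⁻¹ (b * a * b⁻¹) := by
  refine ⟨rfl, fun t => ?_, fun t => ?_⟩
  · show a (b (a⁻¹ (b⁻¹ (false :: t)))) = _
    simp
  · show a (b (a⁻¹ (b⁻¹ (true :: t)))) = _
    simp

lemma isSec_aca : IsSec (a⁻¹ * c * a) a a⁻¹ := by
  refine ⟨rfl, fun t => ?_, fun t => ?_⟩
  · show a⁻¹ (a (b (a⁻¹ (b⁻¹ (a (false :: t)))))) = _
    simp
  · show a⁻¹ (a (b (a⁻¹ (b⁻¹ (a (true :: t)))))) = _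
    simp

lemma b_comm_c : Commute b c := by
  rw [Commute, SemiconjBy]
  have h1 : IsSec (b * c) (a * a⁻¹) (1 * (b * a * b⁻¹)) := isSec_b.mul isSec_c
  have h2 : IsSec (c * b) (a⁻¹ * a) ((b * a * b⁻¹) * 1) := isSec_c.mul isSec_b
  simp only [mul_inv_cancel, inv_mul_cancel, one_mul, mul_one] at h1 h2
  exact h1.ext h2

/-- the permutation acting as `(k₁,k₂)` on sections with trivial root action. -/
def pairF (k₁ k₂ : List Bool → List Bool) : List Bool → List Bool
  | [] => []
  | false :: t => false :: k₁ t
  | true :: t => true :: k₂ t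

def pairPerm (k₁ k₂ : Equiv.Perm (List Bool)) : Equiv.Perm (List Bool) :=
  ⟨pairF ⇑k₁ ⇑k₂, pairF ⇑k₁⁻¹ ⇑k₂⁻¹,
    fun w => by match w with
      | [] => rfl
      | false :: t => show pairF _ _ (false :: k₁ t) = _; simp [pairF]
      | true :: t => show pairF _ _ (true :: k₂ t) = _; simp [pairF],
    fun w => by match w with
      | [] => rfl
      | false :: t => show pairF _ _ (false :: k₁⁻¹ t) = _; simp [pairF]
      | true :: t => show pairF _ _ (true :: k₂⁻¹ t) = _; simp [pairF]⟩

lemma isSec_pairPerm (k₁ k₂ : Equiv.Perm (List Bool)) : IsSec (pairPerm k₁ k₂) k₁ k₂ :=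
  ⟨rfl, fun _ => rfl, fun _ => rfl⟩

lemma pairPerm_mul (k₁ k₂ l₁ l₂ : Equiv.Perm (List Bool)) :
    pairPerm (k₁ * l₁) (k₂ * l₂) = pairPerm k₁ k₂ * pairPerm l₁ l₂ :=
  (isSec_pairPerm _ _).ext ((isSec_pairPerm k₁ k₂).mul (isSec_pairPerm l₁ l₂))

lemma pairPerm_one : pairPerm 1 1 = 1 := (isSec_pairPerm _ _).ext IsSec.one

lemma pairPerm_inv (k₁ k₂ : Equiv.Perm (List Bool)) :
    pairPerm k₁⁻¹ k₂⁻¹ = (pairPerm k₁ k₂)⁻¹ :=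
  (isSec_pairPerm _ _).ext ((isSec_pairPerm k₁ k₂).inv)


-- ### conjugation stability
lemma map_conj_Gam {g : Equiv.Perm (List Bool)} (hg : g ∈ Gam) :
    Gam.map (MulAut.conj g).toMonoidHom = Gam := by
  apply le_antisymm
  · rintro _ ⟨y, hy, rfl⟩
    simpa using mul_mem (mul_mem hg hy) (inv_mem hg)
  · intro x hx
    refine ⟨g⁻¹ * x * g, mul_mem (mul_mem (inv_mem hg) hx) hg, ?_⟩
    simp [MulAut.conj_apply]
    group

lemma conj_Gam' {g x : Equiv.Perm (List Bool)} (hg : g ∈ Gam)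
    (hx : x ∈ ⁅Gam, Gam⁆) : g * x * g⁻¹ ∈ ⁅Gam, Gam⁆ := by
  have h : (⁅Gam, Gam⁆ : Subgroup _).map (MulAut.conj g).toMonoidHom = ⁅Gam, Gam⁆ := by
    rw [Subgroup.map_commutator, map_conj_Gam hg]
  rw [← h]
  exact ⟨x, hx, rfl⟩

lemma conj_Gam'' {g x : Equiv.Perm (List Bool)} (hg : g ∈ Gam)
    (hx : x ∈ ⁅(⁅Gam, Gam⁆ : Subgroup (Equiv.Perm (List Bool))), ⁅Gam, Gam⁆⁆) :
    g * x * g⁻¹ ∈ ⁅(⁅Gam, Gam⁆ : Subgroup (Equiv.Perm (List Bool))), ⁅Gam, Gam⁆⁆ := by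
  have h : (⁅(⁅Gam, Gam⁆ : Subgroup (Equiv.Perm (List Bool))), ⁅Gam, Gam⁆⁆).map
      (MulAut.conj g).toMonoidHom = ⁅(⁅Gam, Gam⁆ : Subgroup (Equiv.Perm (List Bool))), ⁅Gam, Gam⁆⁆ := by
    rw [Subgroup.map_commutator, Subgroup.map_commutator, map_conj_Gam hg]
  rw [← h]
  exact ⟨x, hx, rfl⟩

-- ### normal closures of c and d
def Nc : Subgroup (Equiv.Perm (List Bool)) :=
  Subgroup.closure {x | ∃ k ∈ Gam, x = k * c * k⁻¹}

def Nd : Subgroup (Equiv.Perm (List Bool)) :=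
  Subgroup.closure {x | ∃ k ∈ Gam, x = k * d * k⁻¹}

lemma c_mem_Gam : c ∈ Gam := mul_mem (mul_mem (mul_mem a_mem b_mem) (inv_mem a_mem)) (inv_mem b_mem)
lemma d_mem_Gam : d ∈ Gam := mul_mem (mul_mem (mul_mem c_mem_Gam a_mem) (inv_mem c_mem_Gam)) (inv_mem a_mem)

lemma Nc_le_Gam : Nc ≤ Gam := by
  rw [Nc, Subgroup.closure_le]
  rintro _ ⟨k, hk, rfl⟩
  exact SetLike.mem_coe.mpr (mul_mem (mul_mem hk c_mem_Gam) (inv_mem hk))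

lemma Nd_le_Gam : Nd ≤ Gam := by
  rw [Nd, Subgroup.closure_le]
  rintro _ ⟨k, hk, rfl⟩
  exact SetLike.mem_coe.mpr (mul_mem (mul_mem hk d_mem_Gam) (inv_mem hk))

lemma conj_Nc {g x : Equiv.Perm (List Bool)} (hg : g ∈ Gam) (hx : x ∈ Nc) :
    g * x * g⁻¹ ∈ Nc := by
  induction hx using Subgroup.closure_induction with
  | mem y hy =>
    obtain ⟨k, hk, rfl⟩ := hy
    refine Subgroup.subset_closure ⟨g * k, mul_mem hg hk, by group⟩
  | one => simpa using one_mem Nc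
  | mul y z _ _ hy hz =>
    have : g * (y * z) * g⁻¹ = (g * y * g⁻¹) * (g * z * g⁻¹) := by group
    rw [this]; exact mul_mem hy hz
  | inv y _ hy =>
    have : g * y⁻¹ * g⁻¹ = (g * y * g⁻¹)⁻¹ := by group
    rw [this]; exact inv_mem hy

lemma conj_Nd {g x : Equiv.Perm (List Bool)} (hg : g ∈ Gam) (hx : x ∈ Nd) :
    g * x * g⁻¹ ∈ Nd := by
  induction hx using Subgroup.closure_induction with
  | mem y hy =>
    obtain ⟨k, hk, rfl⟩ := hy
    refine Subgroup.subset_closure ⟨g * k, mul_mem hg hk, by group⟩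
  | one => simpa using one_mem Nd
  | mul y z _ _ hy hz =>
    have : g * (y * z) * g⁻¹ = (g * y * g⁻¹) * (g * z * g⁻¹) := by group
    rw [this]; exact mul_mem hy hz
  | inv y _ hy =>
    have : g * y⁻¹ * g⁻¹ = (g * y * g⁻¹)⁻¹ := by group
    rw [this]; exact inv_mem hy

lemma c_mem_Nc : c ∈ Nc := Subgroup.subset_closure ⟨1, one_mem _, by group⟩
lemma d_mem_Nd : d ∈ Nd := Subgroup.subset_closure ⟨1, one_mem _, by group⟩

lemma Gam'_le_Nc : ⁅Gam, Gam⁆ ≤ Nc := by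
  rw [Subgroup.commutator_le]
  intro p hp q hq
  induction hp using Subgroup.closure_induction generalizing q with
  | mem x hx =>
    -- x = a or x = b ; induct on q
    induction hq using Subgroup.closure_induction with
    | mem y hy =>
      simp only [Set.mem_insert_iff, Set.mem_singleton_iff] at hx hy
      rcases hx with rfl | rfl <;> rcases hy with rfl | rfl
      · simp [commutatorElement_def]
      · exact c_mem_Nc
      · have : ⁅b, a⁆ = c⁻¹ := by rw [← commutatorElement_inv]; rfl
        rw [this]; exact inv_mem c_mem_Nc
      · simp only [commutatorElement_def]
        have : b * b * b⁻¹ * b⁻¹ = 1 := by group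
        rw [this]; exact one_mem Nc
    | one =>
      have : ⁅x, (1 : Equiv.Perm (List Bool))⁆ = 1 := by group
      rw [this]; exact one_mem Nc
    | mul y z hy hz ihy ihz =>
      have : ⁅x, y * z⁆ = ⁅x, y⁆ * (y * ⁅x, z⁆ * y⁻¹) := by group
      rw [this]
      exact mul_mem ihy (conj_Nc hy ihz)
    | inv y hy ihy =>
      have : ⁅x, y⁻¹⁆ = y⁻¹ * ⁅x, y⁆⁻¹ * y := by group
      rw [this]
      exact conj_Nc (inv_mem hy) (inv_mem ihy)
  | one =>
    have : ⁅(1 : Equiv.Perm (List Bool)), q⁆ = 1 := by group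
    rw [this]; exact one_mem Nc
  | mul y z hy hz ihy ihz =>
    have : ⁅y * z, q⁆ = (y * ⁅z, q⁆ * y⁻¹) * ⁅y, q⁆ := by group
    rw [this]
    exact mul_mem (conj_Nc hy (ihz q hq)) (ihy q hq)
  | inv y hy ihy =>
    have : ⁅y⁻¹, q⁆ = y⁻¹ * ⁅y, q⁆⁻¹ * y := by group
    rw [this]
    exact conj_Nc (inv_mem hy) (inv_mem (ihy q hq))

lemma comm_c_mem_Nd {g : Equiv.Perm (List Bool)} (hg : g ∈ Gam) : ⁅g, c⁆ ∈ Nd := by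
  induction hg using Subgroup.closure_induction with
  | mem x hx =>
    simp only [Set.mem_insert_iff, Set.mem_singleton_iff] at hx
    rcases hx with rfl | rfl
    · have : ⁅a, c⁆ = d⁻¹ := by rw [← commutatorElement_inv]; rfl
      rw [this]; exact inv_mem d_mem_Nd
    · rw [commutatorElement_eq_one_iff_commute.mpr b_comm_c]
      exact one_mem Nd
  | one =>
    have : ⁅(1 : Equiv.Perm (List Bool)), c⁆ = 1 := by group
    rw [this]; exact one_mem Nd
  | mul y z hy hz ihy ihz =>
    have : ⁅y * z, c⁆ = (y * ⁅z, c⁆ * y⁻¹) * ⁅y, c⁆ := by group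
    rw [this]
    exact mul_mem (conj_Nd hy ihz) ihy
  | inv y hy ihy =>
    have : ⁅y⁻¹, c⁆ = y⁻¹ * ⁅y, c⁆⁻¹ * y := by group
    rw [this]
    exact conj_Nd (inv_mem hy) (inv_mem ihy)

lemma gam3_le_Nd : ⁅Gam, (⁅Gam, Gam⁆ : Subgroup (Equiv.Perm (List Bool)))⁆ ≤ Nd := by
  rw [Subgroup.commutator_le]
  intro g hg h hh
  have hh' : h ∈ Nc := Gam'_le_Nc hh
  clear hh
  induction hh' using Subgroup.closure_induction generalizing g with
  | mem y hy =>
    obtain ⟨k, hk, rfl⟩ := hy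
    have key : ⁅g, k * c * k⁻¹⁆ = k * ⁅k⁻¹ * g * k, c⁆ * k⁻¹ := by group
    rw [key]
    exact conj_Nd hk (comm_c_mem_Nd (mul_mem (mul_mem (inv_mem hk) hg) hk))
  | one =>
    have : ⁅g, (1 : Equiv.Perm (List Bool))⁆ = 1 := by group
    rw [this]; exact one_mem Nd
  | mul y z hy hz ihy ihz =>
    have : ⁅g, y * z⁆ = ⁅g, y⁆ * (y * ⁅g, z⁆ * y⁻¹) := by group
    rw [this]
    exact mul_mem (ihy g hg) (conj_Nd (Nc_le_Gam hy) (ihz g hg))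
  | inv y hy ihy =>
    have : ⁅g, y⁻¹⁆ = y⁻¹ * ⁅g, y⁆⁻¹ * y := by group
    rw [this]
    exact conj_Nd (inv_mem (Nc_le_Gam hy)) (inv_mem (ihy g hg))

-- ### lifting elements of Γ to first/second coordinate of the stabilizer
lemma exists_hat {g : Equiv.Perm (List Bool)} (hg : g ∈ Gam) :
    (∃ g1 ∈ Gam, ∃ y, IsSec g1 g y) ∧ (∃ g2 ∈ Gam, ∃ y, IsSec g2 y g) := by
  induction hg using Subgroup.closure_induction with
  | mem x hx =>
    simp only [Set.mem_insert_iff, Set.mem_singleton_iff] at hx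
    rcases hx with rfl | rfl
    · exact ⟨⟨b, b_mem, 1, isSec_b⟩,
        ⟨a⁻¹ * b * a, mul_mem (mul_mem (inv_mem a_mem) b_mem) a_mem, 1, isSec_aba⟩⟩
    · exact ⟨⟨a * a, mul_mem a_mem a_mem, b, isSec_a2⟩,
        ⟨a * a, mul_mem a_mem a_mem, b, isSec_a2⟩⟩
  | one => exact ⟨⟨1, one_mem _, 1, IsSec.one⟩, ⟨1, one_mem _, 1, IsSec.one⟩⟩
  | mul y z _ _ ihy ihz =>
    obtain ⟨⟨y1, hy1, u1, hu1⟩, ⟨y2, hy2, u2, hu2⟩⟩ := ihy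
    obtain ⟨⟨z1, hz1, v1, hv1⟩, ⟨z2, hz2, v2, hv2⟩⟩ := ihz
    exact ⟨⟨y1 * z1, mul_mem hy1 hz1, u1 * v1, hu1.mul hv1⟩,
      ⟨y2 * z2, mul_mem hy2 hz2, u2 * v2, hu2.mul hv2⟩⟩
  | inv y _ ihy =>
    obtain ⟨⟨y1, hy1, u1, hu1⟩, ⟨y2, hy2, u2, hu2⟩⟩ := ihy
    exact ⟨⟨y1⁻¹, inv_mem hy1, u1⁻¹, hu1.inv⟩, ⟨y2⁻¹, inv_mem hy2, u2⁻¹, hu2.inv⟩⟩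

-- ### explicit elements of Γ'' realizing (d,1) and (1,d)
lemma pairPerm_d_one_mem :
    pairPerm d 1 ∈ ⁅(⁅Gam, Gam⁆ : Subgroup (Equiv.Perm (List Bool))), ⁅Gam, Gam⁆⁆ := by
  have h1 : IsSec ⁅b, a * a⁆ c 1 := by
    have := isSec_b.commutator isSec_a2
    have e1 : ⁅a, b⁆ = c := rfl
    have e2 : ⁅(1 : Equiv.Perm (List Bool)), b⁆ = 1 := by group
    rwa [e1, e2] at this
  have h2 : IsSec ⁅⁅b, a * a⁆, a⁻¹ * c * a⁆ d 1 := by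
    have := h1.commutator isSec_aca
    have e1 : ⁅c, a⁆ = d := rfl
    have e2 : ⁅(1 : Equiv.Perm (List Bool)), a⁻¹⁆ = 1 := by group
    rwa [e1, e2] at this
  have heq : pairPerm d 1 = ⁅⁅b, a * a⁆, a⁻¹ * c * a⁆ := (isSec_pairPerm d 1).ext h2
  rw [heq]
  exact Subgroup.commutator_mem_commutator
    (Subgroup.commutator_mem_commutator b_mem (mul_mem a_mem a_mem))
    (conj_Gam' (inv_mem a_mem)
      (by have h : c ∈ ⁅Gam, Gam⁆ := Subgroup.commutator_mem_commutator a_mem b_mem; simpa [mul_assoc] using h))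

lemma pairPerm_one_d_mem :
    pairPerm 1 d ∈ ⁅(⁅Gam, Gam⁆ : Subgroup (Equiv.Perm (List Bool))), ⁅Gam, Gam⁆⁆ := by
  have h1 : IsSec ⁅a⁻¹ * b * a, a * a⁆ 1 c := by
    have := isSec_aba.commutator isSec_a2
    have e1 : ⁅a, b⁆ = c := rfl
    have e2 : ⁅(1 : Equiv.Perm (List Bool)), b⁆ = 1 := by group
    rwa [e1, e2] at this
  have h2 : IsSec ⁅⁅a⁻¹ * b * a, a * a⁆, (a⁻¹ * c * a)⁻¹⁆ 1 d := by
    have := h1.commutator isSec_aca.inv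
    have e1 : ⁅c, a⁆ = d := rfl
    have e2 : ⁅(1 : Equiv.Perm (List Bool)), a⁻¹⁆ = 1 := by group
    rw [inv_inv] at this
    rwa [e1, e2] at this
  have heq : pairPerm 1 d = ⁅⁅a⁻¹ * b * a, a * a⁆, (a⁻¹ * c * a)⁻¹⁆ := (isSec_pairPerm 1 d).ext h2
  rw [heq]
  refine Subgroup.commutator_mem_commutator ?_ ?_
  · exact Subgroup.commutator_mem_commutator
      (mul_mem (mul_mem (inv_mem a_mem) b_mem) a_mem) (mul_mem a_mem a_mem)
  · exact inv_mem (conj_Gam' (inv_mem a_mem)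
      (by have h : c ∈ ⁅Gam, Gam⁆ := Subgroup.commutator_mem_commutator a_mem b_mem; simpa [mul_assoc] using h))

lemma pair_mem_Gam'' {k : Equiv.Perm (List Bool)}
    (hk : k ∈ ⁅Gam, (⁅Gam, Gam⁆ : Subgroup (Equiv.Perm (List Bool)))⁆) :
    pairPerm k 1 ∈ ⁅(⁅Gam, Gam⁆ : Subgroup (Equiv.Perm (List Bool))), ⁅Gam, Gam⁆⁆ ∧
      pairPerm 1 k ∈ ⁅(⁅Gam, Gam⁆ : Subgroup (Equiv.Perm (List Bool))), ⁅Gam, Gam⁆⁆ := by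
  have hk' : k ∈ Nd := gam3_le_Nd hk
  clear hk
  induction hk' using Subgroup.closure_induction with
  | mem y hy =>
    obtain ⟨g, hg, rfl⟩ := hy
    obtain ⟨⟨g1, hg1, u1, hu1⟩, ⟨g2, hg2, u2, hu2⟩⟩ := exists_hat hg
    constructor
    · have heq : pairPerm (g * d * g⁻¹) 1 = g1 * pairPerm d 1 * g1⁻¹ := by
        have hs : IsSec (g1 * pairPerm d 1 * g1⁻¹) (g * d * g⁻¹) (u1 * 1 * u1⁻¹) :=
          (hu1.mul (isSec_pairPerm d 1)).mul hu1.inv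
        rw [mul_one, mul_inv_cancel] at hs
        exact (isSec_pairPerm _ _).ext hs
      rw [heq]
      exact conj_Gam'' hg1 pairPerm_d_one_mem
    · have heq : pairPerm 1 (g * d * g⁻¹) = g2 * pairPerm 1 d * g2⁻¹ := by
        have hs : IsSec (g2 * pairPerm 1 d * g2⁻¹) (u2 * 1 * u2⁻¹) (g * d * g⁻¹) :=
          (hu2.mul (isSec_pairPerm 1 d)).mul hu2.inv
        rw [mul_one, mul_inv_cancel] at hs
        exact (isSec_pairPerm _ _).ext hs
      rw [heq]
      exact conj_Gam'' hg2 pairPerm_one_d_mem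
  | one => rw [pairPerm_one]; exact ⟨one_mem _, one_mem _⟩
  | mul y z _ _ ihy ihz =>
    constructor
    · have : pairPerm (y * z) 1 = pairPerm y 1 * pairPerm z 1 := by
        rw [← pairPerm_mul, mul_one]
      rw [this]; exact mul_mem ihy.1 ihz.1
    · have : pairPerm 1 (y * z) = pairPerm 1 y * pairPerm 1 z := by
        rw [← pairPerm_mul, mul_one]
      rw [this]; exact mul_mem ihy.2 ihz.2
  | inv y _ ihy =>
    constructor
    · have : pairPerm y⁻¹ 1 = (pairPerm y 1)⁻¹ := by
        rw [← pairPerm_inv, inv_one]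
      rw [this]; exact inv_mem ihy.1
    · have : pairPerm 1 y⁻¹ = (pairPerm 1 y)⁻¹ := by
        rw [← pairPerm_inv, inv_one]
      rw [this]; exact inv_mem ihy.2

/-- the reverse inclusion -/
lemma reverse_direction {g : Equiv.Perm (List Bool)} (h0 : g [] = [])
    (hsec : ∀ x : Bool, ∃ k ∈ ⁅Gam, (⁅Gam, Gam⁆ : Subgroup (Equiv.Perm (List Bool)))⁆,
      ∀ w : List Bool, g (x :: w) = x :: k w) :
    g ∈ ⁅(⁅Gam, Gam⁆ : Subgroup (Equiv.Perm (List Bool))), ⁅Gam, Gam⁆⁆ := by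
  obtain ⟨k₁, hk₁, hs₁⟩ := hsec false
  obtain ⟨k₂, hk₂, hs₂⟩ := hsec true
  have hg : g = pairPerm k₁ k₂ := by
    have : IsSec g k₁ k₂ := ⟨h0, hs₁, hs₂⟩
    exact this.ext (isSec_pairPerm k₁ k₂)
  have hsplit : pairPerm k₁ k₂ = pairPerm k₁ 1 * pairPerm 1 k₂ := by
    rw [← pairPerm_mul, mul_one, one_mul]
  rw [hg, hsplit]
  exact mul_mem (pair_mem_Gam'' hk₁).1 (pair_mem_Gam'' hk₂).2

-- ### the free group on two generators and its canonical map onto Γ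
local notation "F" => FreeGroup Bool

def x0 : FreeGroup Bool := FreeGroup.of false
def x1 : FreeGroup Bool := FreeGroup.of true

def pi : FreeGroup Bool →* Equiv.Perm (List Bool) :=
  FreeGroup.lift (fun x => bif x then b else a)

@[simp] lemma pi_x0 : pi x0 = a := by simp [pi, x0]
@[simp] lemma pi_x1 : pi x1 = b := by simp [pi, x1]

def Aexp : FreeGroup Bool →* Multiplicative ℤ :=
  FreeGroup.lift (fun x => Multiplicative.ofAdd (bif x then 0 else 1))

def Bexp : FreeGroup Bool →* Multiplicative ℤ :=
  FreeGroup.lift (fun x => Multiplicative.ofAdd (bif x then 1 else 0))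

@[simp] lemma pure_eq_of (x : Bool) : (pure x : FreeGroup Bool) = FreeGroup.of x := rfl
@[simp] lemma pi_of (x : Bool) : pi (FreeGroup.of x) = bif x then b else a := FreeGroup.lift_apply_of
@[simp] lemma Aexp_of (x : Bool) :
    Aexp (FreeGroup.of x) = Multiplicative.ofAdd (bif x then 0 else 1) := FreeGroup.lift_apply_of
@[simp] lemma Bexp_of (x : Bool) :
    Bexp (FreeGroup.of x) = Multiplicative.ofAdd (bif x then 1 else 0) := FreeGroup.lift_apply_of

@[simp] lemma Aexp_x0 : Aexp x0 = Multiplicative.ofAdd 1 := by simp [Aexp, x0]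
@[simp] lemma Aexp_x1 : Aexp x1 = Multiplicative.ofAdd 0 := by simp [Aexp, x1]
@[simp] lemma Bexp_x0 : Bexp x0 = Multiplicative.ofAdd 0 := by simp [Bexp, x0]
@[simp] lemma Bexp_x1 : Bexp x1 = Multiplicative.ofAdd 1 := by simp [Bexp, x1]

lemma range_pi : pi.range = Gam := by
  rw [pi, FreeGroup.range_lift_eq_closure]
  congr 1
  ext y
  constructor
  · rintro ⟨x, rfl⟩
    cases x <;> simp [Gam]
  · intro hy
    rcases hy with rfl | rfl
    · exact ⟨false, rfl⟩
    · exact ⟨true, rfl⟩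

lemma map_pi_top : Subgroup.map pi ⊤ = Gam := by
  rw [← MonoidHom.range_eq_map, range_pi]

def Fder : Subgroup (FreeGroup Bool) :=
  ⁅(⊤ : Subgroup (FreeGroup Bool)), (⊤ : Subgroup (FreeGroup Bool))⁆
def Fgam3 : Subgroup (FreeGroup Bool) := ⁅(⊤ : Subgroup (FreeGroup Bool)), Fder⁆
def Fder2 : Subgroup (FreeGroup Bool) := ⁅Fder, Fder⁆

lemma Fder_def : Fder = ⁅(⊤ : Subgroup (FreeGroup Bool)), (⊤ : Subgroup (FreeGroup Bool))⁆ := rfl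
lemma Fgam3_def : Fgam3 = ⁅(⊤ : Subgroup (FreeGroup Bool)), Fder⁆ := rfl
lemma Fder2_def : Fder2 = ⁅Fder, Fder⁆ := rfl

instance : Fder.Normal := Fder_def ▸ Subgroup.commutator_normal ⊤ ⊤
instance : Fgam3.Normal := Fgam3_def ▸ Subgroup.commutator_normal ⊤ Fder

-- commutators die under homs to commutative groups
lemma Aexp_comm {w : FreeGroup Bool} (hw : w ∈ Fder) :
    Aexp w = 1 := by
  have h : Fder ≤ Aexp.ker := by
    rw [Fder_def, Subgroup.commutator_le]
    intro g₁ _ g₂ _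
    rw [MonoidHom.mem_ker, map_commutatorElement]
    exact commutatorElement_eq_one_iff_commute.mpr (mul_comm _ _)
  exact h hw

lemma Bexp_comm {w : FreeGroup Bool} (hw : w ∈ Fder) :
    Bexp w = 1 := by
  have h : Fder ≤ Bexp.ker := by
    rw [Fder_def, Subgroup.commutator_le]
    intro g₁ _ g₂ _
    rw [MonoidHom.mem_ker, map_commutatorElement]
    exact commutatorElement_eq_one_iff_commute.mpr (mul_comm _ _)
  exact h hw

-- the kernel of the abelianization invariants is the derived subgroup
lemma mem_derived_of_exp {w : FreeGroup Bool} (hA : Aexp w = 1) (hB : Bexp w = 1) :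
    w ∈ Fder := by
  set φ := (Abelianization.of : FreeGroup Bool →* Abelianization (FreeGroup Bool)) with hφ
  have hsurj : Function.Surjective φ := by
    intro z
    exact Quot.inductionOn z fun g => ⟨g, rfl⟩
  have htop : Subgroup.closure {φ x0, φ x1} = (⊤ : Subgroup (Abelianization (FreeGroup Bool))) := by
    have h1 : Subgroup.map φ ⊤ = ⊤ := Subgroup.map_top_of_surjective φ hsurj
    rw [← FreeGroup.closure_range_of Bool, MonoidHom.map_closure] at h1
    rw [← h1]
    congr 1
    ext y
    constructor
    · rintro (rfl | rfl)
      · exact ⟨FreeGroup.of false, ⟨false, rfl⟩, rfl⟩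
      · exact ⟨FreeGroup.of true, ⟨true, rfl⟩, rfl⟩
    · rintro ⟨-, ⟨x, rfl⟩, rfl⟩
      cases x
      · exact Or.inl rfl
      · exact Or.inr rfl
  have hz : φ w = 1 := by
    obtain ⟨m, n, hmn⟩ := Subgroup.mem_closure_pair.mp (htop ▸ Subgroup.mem_top (φ w))
    have hA' : Abelianization.lift Aexp (φ w) = 1 := by
      rw [hφ, Abelianization.lift_apply_of, hA]
    have hB' : Abelianization.lift Bexp (φ w) = 1 := by
      rw [hφ, Abelianization.lift_apply_of, hB]
    rw [← hmn] at hA' hB'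
    simp only [map_mul, map_zpow, hφ, Abelianization.lift_apply_of, Aexp_x0, Aexp_x1, Bexp_x0,
      Bexp_x1] at hA' hB'
    have hm : m = 0 := by
      have := congrArg Multiplicative.toAdd hA'
      simpa using this
    have hn : n = 0 := by
      have := congrArg Multiplicative.toAdd hB'
      simpa using this
    rw [← hmn, hm, hn]
    simp
  have : w ∈ commutator (FreeGroup Bool) := (QuotientGroup.eq_one_iff w).mp hz
  rwa [commutator_def, ← Fder_def] at this

-- key nilpotency computation
lemma L1F {u v : FreeGroup Bool} (hu : u ∈ Fder)
    (hv : v ∈ Fder) (m n : ℤ) :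
    ⁅x0 ^ m * u, x0 ^ n * v⁆ ∈ Fgam3 := by
  have hcen : ∀ (y w : FreeGroup Bool), w ∈ Fder →
      Commute (QuotientGroup.mk' Fgam3 y) (QuotientGroup.mk' Fgam3 w) := by
    intro y w hw
    apply commutatorElement_eq_one_iff_commute.mp
    rw [← map_commutatorElement, QuotientGroup.mk'_apply, QuotientGroup.eq_one_iff]
    rw [Fgam3_def]
    exact Subgroup.commutator_mem_commutator (Subgroup.mem_top y) hw
  have key : (QuotientGroup.mk' Fgam3) ⁅x0 ^ m * u, x0 ^ n * v⁆ = 1 := by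
    rw [map_commutatorElement]
    apply commutatorElement_eq_one_iff_commute.mpr
    rw [map_mul, map_mul, map_zpow, map_zpow]
    have h1 : Commute ((QuotientGroup.mk' Fgam3 x0) ^ m) ((QuotientGroup.mk' Fgam3 x0) ^ n) :=
      (Commute.refl _).zpow_zpow m n
    have hu' : ∀ z : FreeGroup Bool ⧸ Fgam3, Commute (QuotientGroup.mk' Fgam3 u) z := by
      intro z
      obtain ⟨y, rfl⟩ := QuotientGroup.mk'_surjective Fgam3 z
      exact (hcen y u hu).symm
    have hv' : ∀ z : FreeGroup Bool ⧸ Fgam3, Commute z (QuotientGroup.mk' Fgam3 v) := by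
      intro z
      obtain ⟨y, rfl⟩ := QuotientGroup.mk'_surjective Fgam3 z
      exact hcen y v hv
    exact Commute.mul_left (h1.mul_right (hv' _)) (hu' _)
  rw [QuotientGroup.mk'_apply, QuotientGroup.eq_one_iff] at key
  exact key

-- ### master structure lemma: wreath recursion with exponent bookkeeping
lemma master (f : FreeGroup Bool) :
    ∃ (u v : FreeGroup Bool) (s : Bool),
      (Aexp u).toAdd + (Aexp v).toAdd = (Bexp f).toAdd ∧
      (Bexp u).toAdd + (Bexp v).toAdd = (Aexp f).toAdd ∧
      (Bexp u).toAdd - (Bexp v).toAdd = (cond s 1 0) ∧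
      (Aexp f).toAdd % 2 = (cond s 1 0) ∧
      pi f [] = [] ∧
      (s = true → (∀ t, pi f (false :: t) = true :: pi u t) ∧
        (∀ t, pi f (true :: t) = false :: pi v t)) ∧
      (s = false → (∀ t, pi f (false :: t) = false :: pi u t) ∧
        (∀ t, pi f (true :: t) = true :: pi v t)) := by
  induction f using FreeGroup.induction_on with
  | C1 =>
    refine ⟨1, 1, false, by simp, by simp, by simp, by simp, by simp, fun h => by simp at h,
      fun _ => ⟨fun t => ?_, fun t => ?_⟩⟩ <;> simp
  | of x =>
    cases x
    · -- generator a
      refine ⟨x1, 1, true, by simp [x1], by simp [x1], by simp [x1], by simp, by simp,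
        fun _ => ⟨fun t => ?_, fun t => ?_⟩, fun h => by simp at h⟩
      · show pi (FreeGroup.of false) (false :: t) = _
        simp
      · show pi (FreeGroup.of false) (true :: t) = _
        simp
    · -- generator b
      refine ⟨x0, 1, false, by simp [x0], by simp [x0], by simp [x0], by simp, by simp,
        fun h => by simp at h, fun _ => ⟨fun t => ?_, fun t => ?_⟩⟩
      · show pi (FreeGroup.of true) (false :: t) = _
        simp
      · show pi (FreeGroup.of true) (true :: t) = _
        simp
  | inv_of x _ =>
    cases x
    · -- a⁻¹
      refine ⟨1, x1⁻¹, true, by simp [x1], by simp [x1], by simp [x1], by simp, by simp,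
        fun _ => ⟨fun t => ?_, fun t => ?_⟩, fun h => by simp at h⟩
      · show pi (FreeGroup.of false)⁻¹ (false :: t) = _
        simp
      · show pi (FreeGroup.of false)⁻¹ (true :: t) = _
        simp
    · -- b⁻¹
      refine ⟨x0⁻¹, 1, false, by simp [x0], by simp [x0], by simp [x0], by simp, by simp,
        fun h => by simp at h, fun _ => ⟨fun t => ?_, fun t => ?_⟩⟩
      · show pi (FreeGroup.of true)⁻¹ (false :: t) = _
        simp
      · show pi (FreeGroup.of true)⁻¹ (true :: t) = _
        simp
  | mul f g ihf ihg =>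
    obtain ⟨uf, vf, sf, hf1, hf2, hf3, hf4, hf0, hfT, hfF⟩ := ihf
    obtain ⟨ug, vg, sg, hg1, hg2, hg3, hg4, hg0, hgT, hgF⟩ := ihg
    have hmul : ∀ t, pi (f * g) t = pi f (pi g t) := fun t => by
      rw [map_mul]; rfl
    have hmulword : ∀ (p q : FreeGroup Bool) (t : List Bool), pi (p * q) t = pi p (pi q t) :=
      fun p q t => by rw [map_mul]; rfl
    have h0 : pi (f * g) [] = [] := by rw [hmul, hg0, hf0]
    cases sf
    · cases sg
      · -- both untwisted
        obtain ⟨hgF1, hgF2⟩ := hgF rfl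
        obtain ⟨hfF1, hfF2⟩ := hfF rfl
        refine ⟨uf * ug, vf * vg, false, ?_, ?_, ?_, ?_, h0,
          fun h => by simp at h, fun _ => ⟨fun t => ?_, fun t => ?_⟩⟩
        · simp only [map_mul, toAdd_mul, Bool.cond_false, Bool.cond_true] at *; omega
        · simp only [map_mul, toAdd_mul, Bool.cond_false, Bool.cond_true] at *; omega
        · simp only [map_mul, toAdd_mul, Bool.cond_false, Bool.cond_true] at *; omega
        · simp only [map_mul, toAdd_mul, Bool.cond_false, Bool.cond_true] at *; omega
        · rw [hmul, hgF1, hfF1, hmulword]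
        · rw [hmul, hgF2, hfF2, hmulword]
      · -- f untwisted, g twisted
        obtain ⟨hgT1, hgT2⟩ := hgT rfl
        obtain ⟨hfF1, hfF2⟩ := hfF rfl
        refine ⟨vf * ug, uf * vg, true, ?_, ?_, ?_, ?_, h0,
          fun _ => ⟨fun t => ?_, fun t => ?_⟩, fun h => by simp at h⟩
        · simp only [map_mul, toAdd_mul, Bool.cond_false, Bool.cond_true] at *; omega
        · simp only [map_mul, toAdd_mul, Bool.cond_false, Bool.cond_true] at *; omega
        · simp only [map_mul, toAdd_mul, Bool.cond_false, Bool.cond_true] at *; omega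
        · simp only [map_mul, toAdd_mul, Bool.cond_false, Bool.cond_true] at *; omega
        · rw [hmul, hgT1, hfF2, hmulword]
        · rw [hmul, hgT2, hfF1, hmulword]
    · cases sg
      · -- f twisted, g untwisted
        obtain ⟨hgF1, hgF2⟩ := hgF rfl
        obtain ⟨hfT1, hfT2⟩ := hfT rfl
        refine ⟨uf * ug, vf * vg, true, ?_, ?_, ?_, ?_, h0,
          fun _ => ⟨fun t => ?_, fun t => ?_⟩, fun h => by simp at h⟩
        · simp only [map_mul, toAdd_mul, Bool.cond_false, Bool.cond_true] at *; omega
        · simp only [map_mul, toAdd_mul, Bool.cond_false, Bool.cond_true] at *; omega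
        · simp only [map_mul, toAdd_mul, Bool.cond_false, Bool.cond_true] at *; omega
        · simp only [map_mul, toAdd_mul, Bool.cond_false, Bool.cond_true] at *; omega
        · rw [hmul, hgF1, hfT1, hmulword]
        · rw [hmul, hgF2, hfT2, hmulword]
      · -- both twisted
        obtain ⟨hgT1, hgT2⟩ := hgT rfl
        obtain ⟨hfT1, hfT2⟩ := hfT rfl
        refine ⟨vf * ug, uf * vg, false, ?_, ?_, ?_, ?_, h0,
          fun h => by simp at h, fun _ => ⟨fun t => ?_, fun t => ?_⟩⟩
        · simp only [map_mul, toAdd_mul, Bool.cond_false, Bool.cond_true] at *; omega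
        · simp only [map_mul, toAdd_mul, Bool.cond_false, Bool.cond_true] at *; omega
        · simp only [map_mul, toAdd_mul, Bool.cond_false, Bool.cond_true] at *; omega
        · simp only [map_mul, toAdd_mul, Bool.cond_false, Bool.cond_true] at *; omega
        · rw [hmul, hgT1, hfT2, hmulword]
        · rw [hmul, hgT2, hfT1, hmulword]

lemma mem_derived_of_exp' {w : FreeGroup Bool} (hA : (Aexp w).toAdd = 0)
    (hB : (Bexp w).toAdd = 0) : w ∈ Fder := by
  apply mem_derived_of_exp
  · exact Multiplicative.toAdd.injective (by simpa using hA)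
  · exact Multiplicative.toAdd.injective (by simpa using hB)

/-- sections of derived-subgroup elements: they are of the form `a^m·(derived)`. -/
lemma secF' {p : FreeGroup Bool} (hp : p ∈ Fder) :
    ∃ (u v : FreeGroup Bool) (m n : ℤ) (wu wv : FreeGroup Bool),
      wu ∈ Fder ∧ wv ∈ Fder ∧ u = x0 ^ m * wu ∧ v = x0 ^ n * wv ∧
      IsSec (pi p) (pi u) (pi v) := by
  have hA : (Aexp p).toAdd = 0 := by rw [Aexp_comm hp]; rfl
  have hB : (Bexp p).toAdd = 0 := by rw [Bexp_comm hp]; rfl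
  obtain ⟨u, v, s, h1, h2, h3, h4, h0, hT, hF⟩ := master p
  have hs : s = false := by
    cases s
    · rfl
    · rw [hA] at h4; simp at h4
  subst hs
  obtain ⟨hsec1, hsec2⟩ := hF rfl
  simp only [Bool.cond_false] at h3
  have hBu : (Bexp u).toAdd = 0 := by omega
  have hBv : (Bexp v).toAdd = 0 := by omega
  refine ⟨u, v, (Aexp u).toAdd, (Aexp v).toAdd, x0 ^ (-(Aexp u).toAdd) * u,
    x0 ^ (-(Aexp v).toAdd) * v, ?_, ?_, by group, by group, ⟨h0, hsec1, hsec2⟩⟩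
  · apply mem_derived_of_exp' <;>
      simp only [map_mul, map_zpow, toAdd_mul, toAdd_zpow, Aexp_x0, Bexp_x0, toAdd_ofAdd,
        smul_eq_mul] <;> omega
  · apply mem_derived_of_exp' <;>
      simp only [map_mul, map_zpow, toAdd_mul, toAdd_zpow, Aexp_x0, Bexp_x0, toAdd_ofAdd,
        smul_eq_mul] <;> omega

/-- the subgroup of words whose image has sections representable inside `γ₃`. -/
def Zsub : Subgroup (FreeGroup Bool) where
  carrier := {w | ∃ u v : FreeGroup Bool, u ∈ Fgam3 ∧ v ∈ Fgam3 ∧ IsSec (pi w) (pi u) (pi v)}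
  one_mem' := ⟨1, 1, one_mem _, one_mem _, by
    simp only [map_one]; exact IsSec.one⟩
  mul_mem' := by
    rintro w w' ⟨u, v, hu, hv, hsec⟩ ⟨u', v', hu', hv', hsec'⟩
    exact ⟨u * u', v * v', mul_mem hu hu', mul_mem hv hv', by
      simp only [map_mul]; exact hsec.mul hsec'⟩
  inv_mem' := by
    rintro w ⟨u, v, hu, hv, hsec⟩
    exact ⟨u⁻¹, v⁻¹, inv_mem hu, inv_mem hv, by
      simp only [map_inv]; exact hsec.inv⟩

lemma Fder2_le_Zsub : Fder2 ≤ Zsub := by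
  rw [Fder2_def, Subgroup.commutator_le]
  intro p hp q hq
  obtain ⟨up, vp, mp, np, wup, wvp, hwup, hwvp, hup, hvp, hsp⟩ := secF' hp
  obtain ⟨uq, vq, mq, nq, wuq, wvq, hwuq, hwvq, huq, hvq, hsq⟩ := secF' hq
  refine ⟨⁅up, uq⁆, ⁅vp, vq⁆, ?_, ?_, ?_⟩
  · rw [hup, huq]; exact L1F hwup hwuq mp mq
  · rw [hvp, hvq]; exact L1F hwvp hwvq np nq
  · rw [map_commutatorElement, map_commutatorElement, map_commutatorElement]
    exact hsp.commutator hsq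

lemma map_pi_Fder2 :
    Subgroup.map pi Fder2 = ⁅(⁅Gam, Gam⁆ : Subgroup (Equiv.Perm (List Bool))), ⁅Gam, Gam⁆⁆ := by
  rw [Fder2_def, Fder_def, Subgroup.map_commutator, Subgroup.map_commutator, map_pi_top]

lemma map_pi_Fgam3 :
    Subgroup.map pi Fgam3 = ⁅Gam, (⁅Gam, Gam⁆ : Subgroup (Equiv.Perm (List Bool)))⁆ := by
  rw [Fgam3_def, Fder_def, Subgroup.map_commutator, Subgroup.map_commutator, map_pi_top]

lemma forward_direction {g : Equiv.Perm (List Bool)}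
    (hg : g ∈ ⁅(⁅Gam, Gam⁆ : Subgroup (Equiv.Perm (List Bool))), ⁅Gam, Gam⁆⁆) :
    g [] = [] ∧ ∀ x : Bool, ∃ k ∈ ⁅Gam, (⁅Gam, Gam⁆ : Subgroup (Equiv.Perm (List Bool)))⁆,
      ∀ w : List Bool, g (x :: w) = x :: k w := by
  rw [← map_pi_Fder2] at hg
  obtain ⟨w, hw, rfl⟩ := Subgroup.mem_map.mp hg
  obtain ⟨u, v, hu, hv, hsec⟩ := Fder2_le_Zsub hw
  refine ⟨hsec.1, fun x => ?_⟩
  cases x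
  · exact ⟨pi u, map_pi_Fgam3 ▸ Subgroup.mem_map.mpr ⟨u, hu, rfl⟩, hsec.2.1⟩
  · exact ⟨pi v, map_pi_Fgam3 ▸ Subgroup.mem_map.mpr ⟨v, hv, rfl⟩, hsec.2.2⟩


/-- The second derived subgroup `Γ''` equals `γ₃(Γ) × γ₃(Γ)` under the wreath
decomposition: a permutation `g` lies in `Γ'' = ⁅Γ',Γ'⁆` iff it fixes the root, has trivial
root permutation and both its sections lie in `γ₃(Γ) = [Γ, γ₂(Γ)]`
(equivalently, `g(xw) = x (k_x w)` with `k_x ∈ γ₃(Γ)` for `x = 1, 2`). -/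
theorem Gam_second_derived_eq_gamma3_times_gamma3 :
    ∀ g : Equiv.Perm (List Bool),
      g ∈ ⁅(⁅Gam, Gam⁆ : Subgroup (Equiv.Perm (List Bool))), ⁅Gam, Gam⁆⁆ ↔
        (g [] = [] ∧ ∀ x : Bool, ∃ k ∈ ⁅Gam, (⁅Gam, Gam⁆ : Subgroup (Equiv.Perm (List Bool)))⁆,
          ∀ w : List Bool, g (x :: w) = x :: k w) := by
  intro g
  constructor
  · exact forward_direction
  · rintro ⟨h0, hsec⟩
    exact reverse_direction h0 hsec

end PinkGroup
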